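/- arXiv:2403.18130 — 5 statements merged into one kernel-verified Lean document; each statement's English description precedes it below -/
import Mathlib

section
/- The univariate q-Gaussian density integrates to one: for 1 < q < 3, μ_q ∈ ℝ, σ_q > 0, one has ∫_{-∞}^{∞} p_q(x) dx = 1. -/
open MeasureTheory

/-- The Euler Beta function `B(a,b) = ∫₀¹ t^(a-1) (1-t)^(b-1) dt`. -/
noncomputable def Beta (a b : ℝ) : ℝ := ∫ t in (0:ℝ)..1, t ^ (a - 1) * (1 - t) ^ (b - 1)

/-- Normalization constant of the univariate q-Gaussian:
`Z_q = (σ_q²·(3-q)/(q-1))^(1/2) · B(1/2, (3-q)/(2(q-1)))`. -/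
noncomputable def Zq (q σq : ℝ) : ℝ :=
  (σq ^ 2 * (3 - q) / (q - 1)) ^ ((1 : ℝ) / 2) * Beta (1 / 2) ((3 - q) / (2 * (q - 1)))

/-- The univariate q-Gaussian density
`p_q(x) = (1/Z_q)·(1 - ((1-q)/(3-q))·(x-μ_q)²/σ_q²)^(1/(1-q))`. -/
noncomputable def pq (q μq σq x : ℝ) : ℝ :=
  (1 / Zq q σq) * (1 - ((1 - q) / (3 - q)) * (x - μq) ^ 2 / σq ^ 2) ^ (1 / (1 - q))

/-!
The substitution `t = x² / (1 + x²)` maps `(0, ∞)` onto `(0, 1)` and turns the Beta integral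
`B(1/2, p - 1/2)` into `2 ∫₀^∞ (1 + x²)^(-p) dx`; by evenness, `∫_ℝ (1 + x²)^(-p) dx = B(1/2, p - 1/2)`
for `p > 1/2`. For `p = 1/(q-1)` the q-Gaussian kernel is `(1 + ((x - μ_q)/s)²)^(-p)` with
`s = √(σ_q² (3-q)/(q-1))`, whose integral is therefore `s · B(1/2, (3-q)/(2(q-1))) = Z_q`.
-/

open Set

theorem integral_eq_two_smul_integral_Ioi_of_even {E : Type*} [NormedAddCommGroup E]
    [NormedSpace ℝ E] {f : ℝ → E} (heven : ∀ x, f (-x) = f x) (hf : Integrable f) :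
    ∫ x, f x = (2 : ℝ) • ∫ x in Ioi 0, f x := by
  have hleft : ∫ x in Iic 0, f x = ∫ x in Ioi 0, f x := by
    simpa [heven] using (integral_comp_neg_Ioi 0 f).symm
  rw [← intervalIntegral.integral_Iic_add_Ioi hf.integrableOn hf.integrableOn, hleft, two_smul]

theorem hasDerivAt_sq_div_one_add_sq (x : ℝ) :
    HasDerivAt (fun x : ℝ => x ^ 2 / (1 + x ^ 2)) (2 * x / (1 + x ^ 2) ^ 2) x := by
  have hsq : HasDerivAt (fun x : ℝ => x ^ 2) (2 * x) x := by simpa using hasDerivAt_pow 2 x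
  have hquot : HasDerivAt (fun x : ℝ => x ^ 2 / (1 + x ^ 2)) _ x :=
    hsq.div (hsq.const_add 1) (by positivity)
  convert hquot using 1
  ring

theorem strictMonoOn_sq_div_one_add_sq :
    StrictMonoOn (fun x : ℝ => x ^ 2 / (1 + x ^ 2)) (Ici 0) := by
  intro x hx y _ hxy
  have hx : (0 : ℝ) ≤ x := hx
  rw [div_lt_div_iff₀ (by positivity) (by positivity)]
  nlinarith [mul_lt_mul'' hxy hxy hx hx]

theorem image_sq_div_one_add_sq_Ioi :
    (fun x : ℝ => x ^ 2 / (1 + x ^ 2)) '' Ioi 0 = Ioo 0 1 := by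
  ext t
  constructor
  · rintro ⟨x, hx, rfl⟩
    have hx : (0 : ℝ) < x := hx
    exact ⟨by positivity, (div_lt_one (by positivity)).2 (by linarith)⟩
  · rintro ⟨ht0, ht1⟩
    have hpos : 0 < t / (1 - t) := div_pos ht0 (by linarith)
    refine ⟨√(t / (1 - t)), Real.sqrt_pos.2 hpos, ?_⟩
    simp only [Real.sq_sqrt hpos.le]
    field_simp
    ring

theorem integral_Ioo_zero_one_eq_integral_Ioi_sq_div_one_add_sq {F : Type*}
    [NormedAddCommGroup F] [NormedSpace ℝ F] (g : ℝ → F) :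
    ∫ t in Ioo 0 1, g t = ∫ x in Ioi 0, (2 * x / (1 + x ^ 2) ^ 2) • g (x ^ 2 / (1 + x ^ 2)) := by
  rw [← image_sq_div_one_add_sq_Ioi, integral_image_eq_integral_abs_deriv_smul measurableSet_Ioi
    (fun x _ => (hasDerivAt_sq_div_one_add_sq x).hasDerivWithinAt)
    (strictMonoOn_sq_div_one_add_sq.injOn.mono Ioi_subset_Ici_self)]
  refine setIntegral_congr_fun measurableSet_Ioi fun x (hx : 0 < x) => ?_
  rw [abs_of_pos (by positivity)]

theorem Beta_half_eq_two_mul_integral_Ioi (p : ℝ) :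
    Beta (1 / 2) (p - 1 / 2) = 2 * ∫ x in Ioi 0, (1 + x ^ 2) ^ (-p) := by
  rw [Beta, intervalIntegral.integral_of_le zero_le_one, integral_Ioc_eq_integral_Ioo,
    integral_Ioo_zero_one_eq_integral_Ioi_sq_div_one_add_sq, ← integral_const_mul]
  refine setIntegral_congr_fun measurableSet_Ioi fun x (hx : 0 < x) => ?_
  set u := 1 + x ^ 2
  have hu : 0 < u := by positivity
  have hx2 : (x ^ 2) ^ ((1 : ℝ) / 2) = x := by rw [← Real.sqrt_eq_rpow, Real.sqrt_sq hx.le]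
  have hsqrt : (x ^ 2 / u) ^ ((1 : ℝ) / 2 - 1) = u ^ ((1 : ℝ) / 2) / x := by
    rw [show (1 : ℝ) / 2 - 1 = -(1 / 2) by norm_num, Real.rpow_neg (by positivity),
      Real.div_rpow (by positivity) hu.le, inv_div, hx2]
  have hcompl : 1 - x ^ 2 / u = u⁻¹ := by field_simp; ring
  have hpow : u ^ ((1 : ℝ) / 2) * u ^ (-(p - 1 / 2 - 1)) = u ^ 2 * u ^ (-p) := by
    rw [← Real.rpow_add hu, ← Real.rpow_natCast, ← Real.rpow_add hu]
    ring_nf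
  rw [smul_eq_mul, hsqrt, hcompl, Real.inv_rpow hu.le, ← Real.rpow_neg hu.le]
  calc 2 * x / u ^ 2 * (u ^ ((1 : ℝ) / 2) / x * u ^ (-(p - 1 / 2 - 1)))
      = 2 * (u ^ ((1 : ℝ) / 2) * u ^ (-(p - 1 / 2 - 1))) / u ^ 2 := by field_simp
    _ = 2 * u ^ (-p) := by rw [hpow]; field_simp

theorem integrable_one_add_sq_rpow_neg {p : ℝ} (hp : 1 / 2 < p) :
    Integrable fun x : ℝ => (1 + x ^ 2) ^ (-p) := by
  simpa [sq_abs, neg_div, mul_div_assoc] using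
    integrable_rpow_neg_one_add_norm_sq (E := ℝ) (μ := volume) (r := 2 * p) (by simp; linarith)

theorem integral_one_add_sq_rpow_neg {p : ℝ} (hp : 1 / 2 < p) :
    ∫ x : ℝ, (1 + x ^ 2) ^ (-p) = Beta (1 / 2) (p - 1 / 2) := by
  rw [integral_eq_two_smul_integral_Ioi_of_even (fun x => by rw [neg_sq])
    (integrable_one_add_sq_rpow_neg hp), Beta_half_eq_two_mul_integral_Ioi, smul_eq_mul]

theorem Beta_half_pos {p : ℝ} (hp : 1 / 2 < p) : 0 < Beta (1 / 2) (p - 1 / 2) := by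
  rw [← integral_one_add_sq_rpow_neg hp]
  refine integral_pos_of_integrable_nonneg_nonzero (x := 0) ?_ (integrable_one_add_sq_rpow_neg hp)
    (fun x => Real.rpow_nonneg (by positivity) _) (by simp)
  exact (continuous_const.add (continuous_pow 2)).rpow_const
    fun x => Or.inl (by positivity : (1 : ℝ) + x ^ 2 ≠ 0)

theorem integral_one_add_div_sq_rpow_neg {p : ℝ} (hp : 1 / 2 < p) (μ c : ℝ) :
    ∫ x : ℝ, (1 + ((x - μ) / c) ^ 2) ^ (-p) = |c| * Beta (1 / 2) (p - 1 / 2) := by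
  rw [integral_sub_right_eq_self (fun y => (1 + (y / c) ^ 2) ^ (-p)) μ,
    Measure.integral_comp_div (fun y => (1 + y ^ 2) ^ (-p)) c, integral_one_add_sq_rpow_neg hp,
    smul_eq_mul]

theorem pq_eq_one_add_div_sq_rpow_neg {q σq : ℝ} (hq1 : 1 < q) (hq3 : q < 3) (hσ : σq ≠ 0)
    (μq x : ℝ) :
    pq q μq σq x =
      1 / Zq q σq * (1 + ((x - μq) / √(σq ^ 2 * (3 - q) / (q - 1))) ^ 2) ^ (-(1 / (q - 1))) := by
  have hq1' : q - 1 ≠ 0 := by linarith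
  have hq3' : 3 - q ≠ 0 := by linarith
  have hbase : 1 - (1 - q) / (3 - q) * (x - μq) ^ 2 / σq ^ 2
      = 1 + ((x - μq) / √(σq ^ 2 * (3 - q) / (q - 1))) ^ 2 := by
    rw [div_pow, Real.sq_sqrt (div_nonneg (mul_nonneg (sq_nonneg σq) (by linarith)) (by linarith))]
    field_simp
    ring
  have hexp : 1 / (1 - q) = -(1 / (q - 1)) := by rw [← neg_sub, one_div_neg_eq_neg_one_div]
  rw [pq, hbase, hexp]

/-- For `1 < q < 3`, `μ_q ∈ ℝ`, `σ_q > 0`, the univariate q-Gaussian density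
integrates to one. -/
theorem qGaussian_integral_eq_one (q μq σq : ℝ) (hq1 : 1 < q) (hq3 : q < 3) (hσ : 0 < σq) :
    (∫ x : ℝ, pq q μq σq x) = 1 := by
  set s := √(σq ^ 2 * (3 - q) / (q - 1))
  have hs : 0 < s := Real.sqrt_pos.2 (div_pos (mul_pos (pow_pos hσ 2) (by linarith)) (by linarith))
  have hq1' : q - 1 ≠ 0 := by linarith
  have hp : 1 / 2 < 1 / (q - 1) := by
    rw [div_lt_div_iff₀ (by norm_num) (by linarith)]; linarith
  have hZ : Zq q σq = |s| * Beta (1 / 2) (1 / (q - 1) - 1 / 2) := by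
    rw [Zq, abs_of_pos hs, ← Real.sqrt_eq_rpow]
    congr 2
    field_simp
    ring
  have hZpos : 0 < Zq q σq := hZ ▸ mul_pos (abs_pos.2 hs.ne') (Beta_half_pos hp)
  simp_rw [pq_eq_one_add_div_sq_rpow_neg hq1 hq3 hσ.ne', integral_const_mul]
  rw [integral_one_add_div_sq_rpow_neg hp, ← hZ, one_div_mul_cancel hZpos.ne']
end

section
/- The univariate q-Gaussian density satisfies the q-variance (escort) constraint: for 1 < q < 3, μ_q ∈ ℝ, σ_q > 0, both integrals ∫_{-∞}^{∞} p_q(x)^q dx and ∫_{-∞}^{∞} (x-μ_q)²·p_q(x)^q dx converge, and ∫_{-∞}^{∞} (x-μ_q)²·p_q(x)^q dx = σ_q² · ∫_{-∞}^{∞} p_q(x)^q dx; that is, the variance of the normalized q-escort distribution p_q^q/∫p_q^q equals σ_q². -/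
/-!
With `u = x - μ_q`, `c = (q - 1) / ((3 - q) σ_q²)` and `α = q / (q - 1) > 3 / 2`, the escort
density is `p_q^q = Z_q^(-q) (1 + c u²)^(-α)`, which decays like `|u|^(-2α)`, so both integrals
converge. The derivative of `u (1 + c u²)^(1 - α)`, a function vanishing at `±∞`, is
`(1 + c u²)^(-α) - c (2α - 3) u² (1 + c u²)^(-α)`; integrating it over `ℝ` gives
`c (2α - 3) ∫ u² (1 + c u²)^(-α) = ∫ (1 + c u²)^(-α)`, and `σ_q² c (2α - 3) = 1`.
-/

open MeasureTheory

open Real Filter Topology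

section
variable {c : ℝ}

lemma integrable_rpow_neg_one_add_mul_sq {α : ℝ} (hc : 0 < c) (hα : 1 / 2 < α) :
    Integrable fun u : ℝ => (1 + c * u ^ 2) ^ (-α) := by
  have h := (integrable_rpow_neg_one_add_norm_sq (E := ℝ) (μ := volume) (r := 2 * α)
    (by simp; linarith)).comp_mul_left' (sqrt_pos.2 hc).ne'
  refine h.congr (ae_of_all _ fun u => ?_)
  simp only [norm_mul, Real.norm_eq_abs, mul_pow, sq_abs, sq_sqrt hc.le]
  ring_nf

lemma mul_sq_mul_rpow_neg_one_add_mul_sq (hc : 0 ≤ c) (α u : ℝ) :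
    c * u ^ 2 * (1 + c * u ^ 2) ^ (-α) = (1 + c * u ^ 2) ^ (1 - α) - (1 + c * u ^ 2) ^ (-α) := by
  have hb : 0 < 1 + c * u ^ 2 := by positivity
  rw [sub_eq_add_neg 1 α, rpow_add hb, rpow_one]
  ring

lemma integrable_sq_mul_rpow_neg_one_add_mul_sq {α : ℝ} (hc : 0 < c) (hα : 3 / 2 < α) :
    Integrable fun u : ℝ => u ^ 2 * (1 + c * u ^ 2) ^ (-α) := by
  have h := ((integrable_rpow_neg_one_add_mul_sq (α := α - 1) hc (by linarith)).sub
    (integrable_rpow_neg_one_add_mul_sq (α := α) hc (by linarith))).const_mul c⁻¹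
  refine h.congr (ae_of_all _ fun u => ?_)
  simp only [Pi.sub_apply, neg_sub, ← mul_sq_mul_rpow_neg_one_add_mul_sq hc.le]
  field_simp

lemma hasDerivAt_mul_rpow_one_add_mul_sq (hc : 0 ≤ c) (α u : ℝ) :
    HasDerivAt (fun u : ℝ => u * (1 + c * u ^ 2) ^ (1 - α))
      ((1 + c * u ^ 2) ^ (-α) + c * (3 - 2 * α) * (u ^ 2 * (1 + c * u ^ 2) ^ (-α))) u := by
  have hb : 0 < 1 + c * u ^ 2 := by positivity
  have hbase : HasDerivAt (fun u : ℝ => 1 + c * u ^ 2) (c * (2 * u)) u := by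
    simpa using ((hasDerivAt_pow 2 u).const_mul c).const_add 1
  refine ((hasDerivAt_id u).mul (hbase.rpow_const (p := 1 - α) (Or.inl hb.ne'))).congr_deriv ?_
  rw [sub_sub_cancel_left, id_eq]
  linear_combination -mul_sq_mul_rpow_neg_one_add_mul_sq hc α u

lemma abs_mul_rpow_one_add_mul_sq_le (hc : 0 < c) (α u : ℝ) :
    |u * (1 + c * u ^ 2) ^ (1 - α)| ≤ (sqrt c)⁻¹ * (1 + c * u ^ 2) ^ (3 / 2 - α) := by
  have hb : 0 < 1 + c * u ^ 2 := by positivity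
  have hu : |u| ≤ (sqrt c)⁻¹ * (1 + c * u ^ 2) ^ (1 / 2 : ℝ) := by
    rw [← sqrt_eq_rpow, le_inv_mul_iff₀ (sqrt_pos.2 hc), ← sqrt_sq_eq_abs, ← sqrt_mul hc.le]
    exact sqrt_le_sqrt (by linarith)
  rw [abs_mul, abs_of_pos (rpow_pos_of_pos hb _), show 3 / 2 - α = 1 / 2 + (1 - α) by ring,
    rpow_add hb, ← mul_assoc]
  exact mul_le_mul_of_nonneg_right hu (rpow_nonneg hb.le _)

lemma tendsto_mul_rpow_one_add_mul_sq_cocompact {α : ℝ} (hc : 0 < c) (hα : 3 / 2 < α) :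
    Tendsto (fun u : ℝ => u * (1 + c * u ^ 2) ^ (1 - α)) (cocompact ℝ) (𝓝 0) := by
  have hbase : Tendsto (fun u : ℝ => 1 + c * u ^ 2) (cocompact ℝ) atTop := by
    refine tendsto_atTop_add_const_left _ 1 (Tendsto.const_mul_atTop hc ?_)
    exact ((tendsto_pow_atTop two_ne_zero).comp tendsto_norm_cocompact_atTop).congr
      fun u => by simp
  have hlim := ((tendsto_rpow_neg_atTop (by linarith : 0 < α - 3 / 2)).comp hbase).const_mul
    (sqrt c)⁻¹
  rw [mul_zero] at hlim
  refine squeeze_zero_norm (fun u => ?_) hlim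
  simpa [neg_sub] using abs_mul_rpow_one_add_mul_sq_le hc α u


lemma integral_sq_mul_rpow_neg_one_add_mul_sq {α : ℝ} (hc : 0 < c) (hα : 3 / 2 < α) :
    c * (2 * α - 3) * ∫ u : ℝ, u ^ 2 * (1 + c * u ^ 2) ^ (-α)
      = ∫ u : ℝ, (1 + c * u ^ 2) ^ (-α) := by
  have h1 := integrable_rpow_neg_one_add_mul_sq hc (by linarith : 1 / 2 < α)
  have h2 := integrable_sq_mul_rpow_neg_one_add_mul_sq hc hα
  have hlim := tendsto_mul_rpow_one_add_mul_sq_cocompact hc hα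
  have hparts := integral_of_hasDerivAt_of_tendsto
    (hasDerivAt_mul_rpow_one_add_mul_sq hc.le α) (h1.add (h2.const_mul _))
    (hlim.mono_left atBot_le_cocompact) (hlim.mono_left atTop_le_cocompact)
  rw [integral_add h1 (h2.const_mul _), integral_const_mul, sub_self] at hparts
  linarith

end

lemma Beta_nonneg (a b : ℝ) : 0 ≤ Beta a b :=
  intervalIntegral.integral_nonneg zero_le_one fun _ ht =>
    mul_nonneg (rpow_nonneg ht.1 _) (rpow_nonneg (sub_nonneg.2 ht.2) _)

lemma Zq_nonneg {q : ℝ} (hq1 : 1 < q) (hq3 : q < 3) (σq : ℝ) : 0 ≤ Zq q σq :=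
  mul_nonneg (rpow_nonneg (div_nonneg (mul_nonneg (sq_nonneg _) (by linarith)) (by linarith)) _)
    (Beta_nonneg _ _)

lemma pq_rpow_eq {q σq : ℝ} (hq1 : 1 < q) (hq3 : q < 3) (hσ : σq ≠ 0) (μq x : ℝ) :
    pq q μq σq x ^ q = (1 / Zq q σq) ^ q
      * (1 + (q - 1) / ((3 - q) * σq ^ 2) * (x - μq) ^ 2) ^ (-(q / (q - 1))) := by
  have hbase : 1 - ((1 - q) / (3 - q)) * (x - μq) ^ 2 / σq ^ 2
      = 1 + (q - 1) / ((3 - q) * σq ^ 2) * (x - μq) ^ 2 := by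
    have : 3 - q ≠ 0 := by linarith
    field_simp
    ring
  have hpos : 0 < 1 + (q - 1) / ((3 - q) * σq ^ 2) * (x - μq) ^ 2 := by
    have : 0 < 3 - q := by linarith
    have : 0 < q - 1 := by linarith
    positivity
  have hexp : 1 / (1 - q) * q = -(q / (q - 1)) := by
    rw [one_div_mul_eq_div, ← neg_sub q 1, div_neg]
  rw [pq, hbase, mul_rpow (one_div_nonneg.2 (Zq_nonneg hq1 hq3 σq)) (rpow_nonneg hpos.le _),
    ← rpow_mul hpos.le, hexp]

/-- For `1 < q < 3`, both `∫ p_q^q` and `∫ (x-μ_q)²·p_q^q` converge, and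
`∫ (x-μ_q)²·p_q(x)^q dx = σ_q² · ∫ p_q(x)^q dx`: the variance of the normalized
q-escort distribution equals `σ_q²`. -/
theorem qGaussian_escort_variance (q μq σq : ℝ) (hq1 : 1 < q) (hq3 : q < 3) (hσ : 0 < σq) :
    Integrable (fun x : ℝ => pq q μq σq x ^ q) ∧
    Integrable (fun x : ℝ => (x - μq) ^ 2 * pq q μq σq x ^ q) ∧
    (∫ x : ℝ, (x - μq) ^ 2 * pq q μq σq x ^ q) = σq ^ 2 * ∫ x : ℝ, pq q μq σq x ^ q := by
  set c := (q - 1) / ((3 - q) * σq ^ 2)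
  set α := q / (q - 1)
  set C := (1 / Zq q σq) ^ q
  have hc : 0 < c := div_pos (by linarith) (mul_pos (by linarith) (pow_pos hσ 2))
  have hα : 3 / 2 < α := by rw [lt_div_iff₀ (by linarith)]; linarith
  have hσc : σq ^ 2 * (c * (2 * α - 3)) = 1 := by
    have : q - 1 ≠ 0 := by linarith
    have : 3 - q ≠ 0 := by linarith
    simp only [c, α]
    field_simp
    ring
  have hp : (fun x => pq q μq σq x ^ q) = fun x => C * (1 + c * (x - μq) ^ 2) ^ (-α) :=
    funext (pq_rpow_eq hq1 hq3 hσ.ne' μq)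
  have hp2 : (fun x => (x - μq) ^ 2 * pq q μq σq x ^ q)
      = fun x => C * ((x - μq) ^ 2 * (1 + c * (x - μq) ^ 2) ^ (-α)) :=
    funext fun x => by rw [pq_rpow_eq hq1 hq3 hσ.ne']; ring
  rw [hp, hp2, integral_const_mul, integral_const_mul,
    integral_sub_right_eq_self (fun u => (1 + c * u ^ 2) ^ (-α)) μq,
    integral_sub_right_eq_self (fun u => u ^ 2 * (1 + c * u ^ 2) ^ (-α)) μq,
    ← integral_sq_mul_rpow_neg_one_add_mul_sq hc hα]
  refine ⟨((integrable_rpow_neg_one_add_mul_sq hc (by linarith)).comp_sub_right μq).const_mul C,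
    ((integrable_sq_mul_rpow_neg_one_add_mul_sq hc hα).comp_sub_right μq).const_mul C, ?_⟩
  linear_combination (-C * ∫ u : ℝ, u ^ 2 * (1 + c * u ^ 2) ^ (-α)) * hσc
end

section
/- For 5/3 ≤ q < 3, μ_q ∈ ℝ, σ_q > 0, the function x ↦ (x-μ_q)²·p_q(x) is NOT Lebesgue integrable on ℝ; i.e., the second moment of the univariate q-Gaussian is infinite for q ≥ 5/3. -/
open MeasureTheory

open Set in
lemma beta_half_pos {v : ℝ} (hv : 0 < v) : 0 < Beta (1/2) v := by
  have hint : IntervalIntegrable (fun t : ℝ => t ^ ((1:ℝ)/2 - 1) * (1 - t) ^ (v - 1))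
      volume 0 1 := by
    have hC := Complex.betaIntegral_convergent (u := 1/2) (v := v) (by norm_num)
      (by simpa using hv)
    rw [intervalIntegrable_iff_integrableOn_Ioc_of_le (by norm_num)] at hC ⊢
    refine IntegrableOn.congr_fun hC.re (fun t ht => ?_) measurableSet_Ioc
    have h1 : ((1:ℂ)/2 - 1) = (((1:ℝ)/2 - 1 : ℝ) : ℂ) := by push_cast; ring
    have h2 : ((v:ℂ) - 1) = ((v - 1 : ℝ) : ℂ) := by push_cast; ring
    have h3 : (1 - (t:ℂ)) = ((1 - t : ℝ) : ℂ) := by push_cast; ring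
    simp only [h1, h2, h3, ← Complex.ofReal_cpow ht.1.le,
      ← Complex.ofReal_cpow (by linarith [ht.2] : (0:ℝ) ≤ 1 - t),
      ← Complex.ofReal_mul, RCLike.re_to_complex, Complex.ofReal_re]
  refine intervalIntegral.intervalIntegral_pos_of_pos_on hint (fun t ht => ?_) one_pos
  exact mul_pos (Real.rpow_pos_of_pos ht.1 _)
    (Real.rpow_pos_of_pos (by linarith [ht.2]) _)

/-- For `5/3 ≤ q < 3`, `x ↦ (x-μ_q)²·p_q(x)` is not Lebesgue integrable:
the second moment of the univariate q-Gaussian is infinite for `q ≥ 5/3`. -/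
theorem qGaussian_second_moment_infinite (q μq σq : ℝ) (hq1 : 5 / 3 ≤ q) (hq3 : q < 3)
    (hσ : 0 < σq) :
    ¬ Integrable (fun x : ℝ => (x - μq) ^ 2 * pq q μq σq x) := by
  intro hI
  have hq1' : 1 < q := by linarith
  have h3q : 0 < 3 - q := by linarith
  have hq1'' : 0 < q - 1 := by linarith
  -- positivity of the normalization constant
  have hZ : 0 < Zq q σq := by
    apply mul_pos
    · exact Real.rpow_pos_of_pos (div_pos (mul_pos (pow_pos hσ 2) h3q) hq1'') _
    · exact beta_half_pos (div_pos h3q (by linarith))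
  set A : ℝ := (q - 1) / ((3 - q) * σq ^ 2) with hA_def
  have hA : 0 < A := div_pos hq1'' (mul_pos h3q (pow_pos hσ 2))
  set e : ℝ := 1 / (1 - q) with he_def
  have he : e < 0 := div_neg_of_pos_of_neg one_pos (by linarith)
  have hee : -1 ≤ 2 + 2 * e := by
    have h1 : e = -((q - 1)⁻¹) := by
      rw [he_def, one_div, show (1 - q) = -(q - 1) by ring, inv_neg]
    have h2 : (q - 1)⁻¹ ≤ (2/3 : ℝ)⁻¹ :=
      inv_anti₀ (by norm_num) (by linarith)
    rw [h1]; norm_num at h2 ⊢; linarith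
  have hBe : 0 < (1 + A) ^ e := Real.rpow_pos_of_pos (by linarith) e
  set c : ℝ := (1 / Zq q σq) * (1 + A) ^ e * (1/2) with hc_def
  have hc : 0 < c := by
    apply mul_pos (mul_pos _ hBe) (by norm_num)
    exact one_div_pos.mpr hZ
  set a : ℝ := |μq| + 1 with ha_def
  have ha : 0 < a := by positivity
  -- pointwise lower bound on Ioi a
  have key : ∀ x ∈ Set.Ioi a, c * x ^ (-1:ℝ) ≤ (x - μq) ^ 2 * pq q μq σq x := by
    intro x hx
    rw [Set.mem_Ioi] at hx
    have hμ : |μq| < x := by linarith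
    have habs := abs_le.mp (le_of_lt hμ)
    set t : ℝ := x - μq with ht_def
    have ht1 : 1 ≤ t := by
      have := neg_abs_le μq
      simp only [ht_def]; linarith [hx, (abs_le.mp (le_refl |μq|)).2]
    have ht0 : 0 < t := by linarith
    have hx0 : 0 < x := by linarith
    have ht2 : t ≤ 2 * x := by
      have := neg_abs_le μq
      simp only [ht_def]; linarith
    -- rewrite pq
    have hpq : pq q μq σq x = (1 / Zq q σq) * (1 + A * t ^ 2) ^ e := by
      rw [pq, ← he_def, ← ht_def]
      congr 2
      rw [hA_def]
      field_simp
      ring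
    have hbase : (0:ℝ) < 1 + A * t ^ 2 := by positivity
    -- (1 + A t²) ≤ (1+A) t², so raising to negative power flips
    have h1 : ((1 + A) * t ^ 2) ^ e ≤ (1 + A * t ^ 2) ^ e := by
      apply Real.rpow_le_rpow_of_nonpos hbase _ he.le
      nlinarith
    have h2 : ((1 + A) * t ^ 2) ^ e = (1 + A) ^ e * t ^ (2 * e) := by
      rw [Real.mul_rpow (by linarith) (by positivity), ← Real.rpow_two,
        ← Real.rpow_mul ht0.le]
    have h3 : t ^ (-1:ℝ) ≤ t ^ (2 + 2 * e) :=
      Real.rpow_le_rpow_of_exponent_le ht1 hee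
    have h4 : (1/2 : ℝ) * x ^ (-1:ℝ) ≤ t ^ (-1:ℝ) := by
      rw [Real.rpow_neg_one, Real.rpow_neg_one]
      have : (2 * x)⁻¹ ≤ t⁻¹ := inv_anti₀ ht0 ht2
      rw [mul_inv] at this
      calc (1/2 : ℝ) * x⁻¹ = 2⁻¹ * x⁻¹ := by norm_num
        _ ≤ t⁻¹ := this
    have h5 : t ^ (2 + 2 * e) = t ^ 2 * t ^ (2 * e) := by
      rw [Real.rpow_add ht0, ← Real.rpow_two]
    calc c * x ^ (-1:ℝ)
        = ((1 / Zq q σq) * (1 + A) ^ e) * ((1/2) * x ^ (-1:ℝ)) := by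
          rw [hc_def]; ring
      _ ≤ ((1 / Zq q σq) * (1 + A) ^ e) * t ^ (-1:ℝ) := by
          apply mul_le_mul_of_nonneg_left h4
          positivity
      _ ≤ ((1 / Zq q σq) * (1 + A) ^ e) * t ^ (2 + 2 * e) := by
          apply mul_le_mul_of_nonneg_left h3
          positivity
      _ = t ^ 2 * ((1 / Zq q σq) * ((1 + A) ^ e * t ^ (2 * e))) := by
          rw [h5]; ring
      _ = t ^ 2 * ((1 / Zq q σq) * ((1 + A) * t ^ 2) ^ e) := by rw [h2]
      _ ≤ t ^ 2 * ((1 / Zq q σq) * (1 + A * t ^ 2) ^ e) := by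
          apply mul_le_mul_of_nonneg_left _ (by positivity)
          apply mul_le_mul_of_nonneg_left h1
          positivity
      _ = t ^ 2 * pq q μq σq x := by rw [hpq]
  -- conclude integrability of x ↦ c * x⁻¹ on Ioi a
  have hmono : IntegrableOn (fun x : ℝ => c * x ^ (-1:ℝ)) (Set.Ioi a) := by
    apply Integrable.mono' hI.integrableOn
    · measurability
    · rw [ae_restrict_iff' measurableSet_Ioi]
      filter_upwards with x hx
      have hx0 : 0 < x := lt_trans ha hx
      rw [Real.norm_eq_abs, abs_of_nonneg (by positivity)]
      exact key x hx
  have hinv : IntegrableOn (fun x : ℝ => x ^ (-1:ℝ)) (Set.Ioi a) := by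
    have h := hmono.const_mul c⁻¹
    refine IntegrableOn.congr_fun h (fun x _ => ?_) measurableSet_Ioi
    rw [← mul_assoc, inv_mul_cancel₀ hc.ne', one_mul]
  have := (integrableOn_Ioi_rpow_iff ha).mp hinv
  linarith
end

section
/- Let n ≥ 1, let B ∈ ℝ^{n×n} be a symmetric positive-definite matrix, μ ∈ ℝⁿ, and let 1 < q < 1 + 2/n. Then the integral over ℝⁿ of [1 + (q-1)·(x-μ)ᵀB(x-μ)]^{-1/(q-1)} converges and equals (q-1)^{-n/2}·(det B)^{-1/2}·π^{n/2}·Γ(1/(q-1) - n/2)/Γ(1/(q-1)). -/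
open MeasureTheory Matrix
open Real Set

/-! Writing `(q - 1) B = Sᵀ S`, the substitution `y = S (x - μ)` turns the integral into
`|det S|⁻¹ ∫ (1 + |y|²)^(-P)` with `P = 1 / (q - 1)`. In polar coordinates this is
`n · vol(unit ball) · ∫₀^∞ r^(n-1) (1 + r²)^(-P) dr`, and the substitutions `r² = s`,
`s = u / (1 - u)` turn the radial integral into the Beta integral `B(n/2, P - n/2) / 2`;
the condition `q < 1 + 2/n` is exactly `n/2 < P`. -/

lemma Complex.betaIntegral_ofReal (a b : ℝ) :
    Complex.betaIntegral a b =
      ((∫ x in Ioo (0 : ℝ) 1, x ^ (a - 1) * (1 - x) ^ (b - 1) : ℝ) : ℂ) := by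
  rw [Complex.betaIntegral, intervalIntegral.integral_of_le zero_le_one,
    integral_Ioc_eq_integral_Ioo, ← integral_complex_ofReal]
  refine setIntegral_congr_fun measurableSet_Ioo fun x hx => ?_
  rw [Complex.ofReal_mul, Complex.ofReal_cpow hx.1.le, Complex.ofReal_cpow (sub_nonneg.2 hx.2.le)]
  push_cast
  ring

lemma integral_Ioo_rpow_mul_one_sub_rpow {a b : ℝ} (ha : 0 < a) (hb : 0 < b) :
    ∫ x in Ioo (0 : ℝ) 1, x ^ (a - 1) * (1 - x) ^ (b - 1) = ProbabilityTheory.beta a b := by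
  rw [ProbabilityTheory.beta_eq_betaIntegralReal a b ha hb, Complex.betaIntegral_ofReal,
    Complex.ofReal_re]

lemma integral_Ioi_rpow_mul_one_add_rpow {a b : ℝ} (ha : 0 < a) (hb : 0 < b) :
    ∫ s in Ioi (0 : ℝ), s ^ (a - 1) * (1 + s) ^ (-(a + b)) = ProbabilityTheory.beta a b := by
  have himg : (fun u : ℝ => u / (1 - u)) '' Ioo 0 1 = Ioi 0 := by
    ext s
    refine ⟨?_, fun hs => ⟨s / (1 + s), ⟨?_, ?_⟩, ?_⟩⟩
    · rintro ⟨u, ⟨h0, h1⟩, rfl⟩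
      exact div_pos h0 (sub_pos.2 h1)
    · have : (0 : ℝ) < s := hs
      positivity
    · exact (div_lt_one (by linarith [mem_Ioi.1 hs])).2 (by linarith)
    · have : (1 : ℝ) + s ≠ 0 := by linarith [mem_Ioi.1 hs]
      field_simp
      ring
  have hderiv : ∀ u ∈ Ioo (0 : ℝ) 1,
      HasDerivWithinAt (fun u : ℝ => u / (1 - u)) ((1 - u) ^ 2)⁻¹ (Ioo 0 1) u := by
    intro u hu
    have h1 : (1 : ℝ) - u ≠ 0 := (sub_pos.2 hu.2).ne'
    refine (((hasDerivAt_id' u).div ((hasDerivAt_id' u).const_sub 1) h1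
      ).congr_deriv ?_).hasDerivWithinAt
    field_simp
    ring
  have hinj : InjOn (fun u : ℝ => u / (1 - u)) (Ioo 0 1) := by
    intro u hu v hv h
    have h1 : (1 : ℝ) - u ≠ 0 := (sub_pos.2 hu.2).ne'
    have h2 : (1 : ℝ) - v ≠ 0 := (sub_pos.2 hv.2).ne'
    field_simp at h
    linarith
  rw [← himg, integral_image_eq_integral_abs_deriv_smul measurableSet_Ioo hderiv hinj,
    ← integral_Ioo_rpow_mul_one_sub_rpow ha hb]
  refine setIntegral_congr_fun measurableSet_Ioo fun u ⟨hu0, hu1⟩ => ?_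
  have hv : (0 : ℝ) < 1 - u := sub_pos.2 hu1
  have hsum : 1 + u / (1 - u) = (1 - u)⁻¹ := by field_simp; ring
  rw [smul_eq_mul, hsum, div_rpow hu0.le hv.le, inv_rpow hv.le, rpow_neg hv.le, inv_inv,
    abs_of_pos (by positivity)]
  rw [show b - 1 = a + b - 2 - (a - 1) by ring, rpow_sub hv (a + b - 2), rpow_sub hv (a + b) 2,
    rpow_two]
  field_simp

lemma integral_Ioi_rpow_mul_one_add_sq_rpow {d P : ℝ} (hd : 0 < d) (hdP : d < 2 * P) :
    ∫ r in Ioi (0 : ℝ), r ^ (d - 1) * (1 + r ^ 2) ^ (-P) =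
      ProbabilityTheory.beta (d / 2) (P - d / 2) / 2 := by
  have hsub := integral_comp_rpow_Ioi (fun s : ℝ => s ^ (d / 2 - 1) * (1 + s) ^ (-P)) two_ne_zero
  have hbeta := integral_Ioi_rpow_mul_one_add_rpow (a := d / 2) (b := P - d / 2)
    (by linarith) (by linarith)
  rw [add_sub_cancel] at hbeta
  rw [← hbeta, ← hsub, ← integral_div]
  refine setIntegral_congr_fun measurableSet_Ioi fun r (hr : 0 < r) => ?_
  rw [rpow_two, ← rpow_natCast, ← rpow_mul hr.le, smul_eq_mul]
  have hpow : r ^ (d - 1) = r ^ ((2 : ℝ) - 1) * r ^ (((2 : ℕ) : ℝ) * (d / 2 - 1)) := by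
    rw [← rpow_add hr]
    ring_nf
  rw [hpow, abs_two]
  ring

theorem integral_one_add_norm_sq_rpow_neg {E : Type*} [NormedAddCommGroup E]
    [InnerProductSpace ℝ E] [FiniteDimensional ℝ E] [MeasurableSpace E] [BorelSpace E]
    [Nontrivial E] {P : ℝ} (hP : Module.finrank ℝ E < 2 * P) :
    ∫ x : E, (1 + ‖x‖ ^ 2) ^ (-P) =
      π ^ (Module.finrank ℝ E / 2 : ℝ) * Gamma (P - Module.finrank ℝ E / 2) / Gamma P := by
  have hn : (0 : ℝ) < Module.finrank ℝ E := Nat.cast_pos.2 Module.finrank_pos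
  have hradial : ∫ r in Ioi (0 : ℝ), r ^ (Module.finrank ℝ E - 1) • (1 + r ^ 2) ^ (-P) =
      ∫ r in Ioi (0 : ℝ), r ^ ((Module.finrank ℝ E : ℝ) - 1) * (1 + r ^ 2) ^ (-P) := by
    refine setIntegral_congr_fun measurableSet_Ioi fun r _ => ?_
    rw [smul_eq_mul, ← rpow_natCast, Nat.cast_sub Module.finrank_pos, Nat.cast_one]
  have hball : volume.real (Metric.ball (0 : E) 1) =
      π ^ ((Module.finrank ℝ E : ℝ) / 2) / Gamma (Module.finrank ℝ E / 2 + 1) := by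
    rw [measureReal_def, InnerProductSpace.volume_ball, ENNReal.ofReal_one, one_pow, one_mul,
      ENNReal.toReal_ofReal (by positivity), ← rpow_natCast, ← rpow_div_two_eq_sqrt _ pi_pos.le]
  rw [integral_fun_norm_addHaar volume (fun r => (1 + r ^ 2) ^ (-P)), hradial,
    integral_Ioi_rpow_mul_one_add_sq_rpow hn hP, hball, nsmul_eq_mul, smul_eq_mul,
    ProbabilityTheory.beta, add_sub_cancel, Gamma_add_one (by positivity)]
  have hΓd := Gamma_pos_of_pos (by positivity : (0 : ℝ) < Module.finrank ℝ E / 2)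
  have hΓP := Gamma_pos_of_pos (by linarith : (0 : ℝ) < P)
  field_simp

section DotProduct

variable {ι : Type*} [Fintype ι]

lemma EuclideanSpace.norm_toLp_sq (x : ι → ℝ) : ‖WithLp.toLp 2 x‖ ^ 2 = x ⬝ᵥ x := by
  rw [EuclideanSpace.real_norm_sq_eq]
  simp [dotProduct, sq]

lemma integrable_one_add_dotProduct_self_rpow_neg {P : ℝ} (hP : Fintype.card ι < 2 * P) :
    Integrable (fun y : ι → ℝ => (1 + y ⬝ᵥ y) ^ (-P)) := by
  have h := integrable_rpow_neg_one_add_norm_sq (E := EuclideanSpace ℝ ι) (μ := volume)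
    (r := 2 * P) (by rwa [finrank_euclideanSpace])
  rw [← (PiLp.volume_preserving_toLp ι).integrable_comp_emb
    (MeasurableEquiv.toLp 2 _).measurableEmbedding] at h
  simpa [Function.comp_def, EuclideanSpace.norm_toLp_sq, neg_div,
    mul_div_cancel_left₀ P two_ne_zero] using h

lemma integral_one_add_dotProduct_self_rpow_neg [Nonempty ι] {P : ℝ}
    (hP : Fintype.card ι < 2 * P) :
    ∫ y : ι → ℝ, (1 + y ⬝ᵥ y) ^ (-P) =
      π ^ (Fintype.card ι / 2 : ℝ) * Gamma (P - Fintype.card ι / 2) / Gamma P := by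
  have h := integral_one_add_norm_sq_rpow_neg (E := EuclideanSpace ℝ ι) (P := P)
    (by rwa [finrank_euclideanSpace])
  rw [← (PiLp.volume_preserving_toLp ι).integral_comp
    (MeasurableEquiv.toLp 2 _).measurableEmbedding, finrank_euclideanSpace] at h
  simpa [EuclideanSpace.norm_toLp_sq] using h

end DotProduct

section LinearChangeOfVariables

variable {E F : Type*} [NormedAddCommGroup E] [NormedSpace ℝ E] [FiniteDimensional ℝ E]
  [MeasurableSpace E] [BorelSpace E] (μ : Measure E) [μ.IsAddHaarMeasure]
  [NormedAddCommGroup F] {L : E →ₗ[ℝ] E}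

lemma LinearMap.measurableEmbedding_of_det_ne_zero (hL : LinearMap.det L ≠ 0) :
    MeasurableEmbedding L :=
  (L.equivOfDetNeZero hL).toContinuousLinearEquiv.toHomeomorph.measurableEmbedding

lemma integrable_comp_linearMap_iff (hL : LinearMap.det L ≠ 0) {g : E → F} :
    Integrable (fun x => g (L x)) μ ↔ Integrable g μ := by
  rw [← Function.comp_def, ← (L.measurableEmbedding_of_det_ne_zero hL).integrable_map_iff,
    Measure.map_linearMap_addHaar_eq_smul_addHaar μ hL]
  exact integrable_smul_measure (by simpa using hL) ENNReal.ofReal_ne_top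

lemma integral_comp_linearMap [NormedSpace ℝ F] (hL : LinearMap.det L ≠ 0) (g : E → F) :
    ∫ x, g (L x) ∂μ = |LinearMap.det L|⁻¹ • ∫ y, g y ∂μ := by
  rw [← (L.measurableEmbedding_of_det_ne_zero hL).integral_map,
    Measure.map_linearMap_addHaar_eq_smul_addHaar μ hL, integral_smul_measure,
    ENNReal.toReal_ofReal (abs_nonneg _), abs_inv]

end LinearChangeOfVariables

section QuadraticForm

variable {ι : Type*} [Fintype ι]

open scoped MatrixOrder in
lemma Matrix.PosSemidef.exists_transpose_mul_self_eq {C : Matrix ι ι ℝ} (hC : C.PosSemidef) :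
    ∃ S : Matrix ι ι ℝ, Sᵀ * S = C := by
  classical
  refine ⟨CFC.sqrt C, ?_⟩
  rw [← conjTranspose_eq_transpose_of_trivial,
    (nonneg_iff_posSemidef.mp (CFC.sqrt_nonneg C)).1.eq, CFC.sqrt_mul_sqrt_self C hC.nonneg]

lemma Matrix.dotProduct_transpose_mul_mulVec (S : Matrix ι ι ℝ) (x : ι → ℝ) :
    x ⬝ᵥ (Sᵀ * S) *ᵥ x = S *ᵥ x ⬝ᵥ S *ᵥ x := by
  rw [← mulVec_mulVec, dotProduct_mulVec, vecMul_transpose]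

theorem integrable_and_integral_one_add_dotProduct_mulVec_rpow_neg [DecidableEq ι] [Nonempty ι]
    {C : Matrix ι ι ℝ} (hC : C.PosDef) (μ : ι → ℝ) {P : ℝ}
    (hP : Fintype.card ι < 2 * P) :
    Integrable (fun x => (1 + (x - μ) ⬝ᵥ C *ᵥ (x - μ)) ^ (-P)) ∧
      ∫ x, (1 + (x - μ) ⬝ᵥ C *ᵥ (x - μ)) ^ (-P) =
        C.det ^ (-(1 : ℝ) / 2) *
          (π ^ (Fintype.card ι / 2 : ℝ) * Gamma (P - Fintype.card ι / 2) / Gamma P) := by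
  obtain ⟨S, rfl⟩ := hC.posSemidef.exists_transpose_mul_self_eq
  have hdet : (Sᵀ * S).det = |S.det| ^ 2 := by rw [det_mul, det_transpose, sq_abs, sq]
  have hS : LinearMap.det (toLin' S) ≠ 0 := by
    rw [LinearMap.det_toLin']
    intro h
    exact hC.det_pos.ne' (by rw [hdet, h, abs_zero, sq, zero_mul])
  have hkernel : (fun x => (1 + (x - μ) ⬝ᵥ (Sᵀ * S) *ᵥ (x - μ)) ^ (-P)) =
      fun x => (fun y => (1 + y ⬝ᵥ y) ^ (-P)) (toLin' S (x - μ)) := by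
    simp only [dotProduct_transpose_mul_mulVec, toLin'_apply]
  rw [hkernel]
  refine ⟨((integrable_comp_linearMap_iff volume hS).2
    (integrable_one_add_dotProduct_self_rpow_neg hP)).comp_sub_right μ, ?_⟩
  rw [integral_sub_right_eq_self (fun x => (1 + toLin' S x ⬝ᵥ toLin' S x) ^ (-P)) μ,
    integral_comp_linearMap volume hS fun y => (1 + y ⬝ᵥ y) ^ (-P),
    integral_one_add_dotProduct_self_rpow_neg hP,
    LinearMap.det_toLin', smul_eq_mul, hdet, ← rpow_natCast, ← rpow_mul (abs_nonneg _)]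
  norm_num [rpow_neg_one]

end QuadraticForm

theorem integral_qGaussian_kernel_general (n : ℕ) (hn : 1 ≤ n) (B : Matrix (Fin n) (Fin n) ℝ)
    (hpos : B.PosDef) (μ : Fin n → ℝ) (q : ℝ)
    (hq1 : 1 < q) (hq2 : q < 1 + 2 / (n : ℝ)) :
    Integrable (fun x : Fin n → ℝ =>
      (1 + (q - 1) * ((x - μ) ⬝ᵥ B.mulVec (x - μ))) ^ (-(1 / (q - 1)))) ∧
    (∫ x : Fin n → ℝ, (1 + (q - 1) * ((x - μ) ⬝ᵥ B.mulVec (x - μ))) ^ (-(1 / (q - 1)))) =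
      (q - 1) ^ (-(n : ℝ) / 2) * B.det ^ (-(1 : ℝ) / 2) * Real.pi ^ ((n : ℝ) / 2) *
        Real.Gamma (1 / (q - 1) - (n : ℝ) / 2) / Real.Gamma (1 / (q - 1)) := by
  have hc : 0 < q - 1 := sub_pos.2 hq1
  have : Nonempty (Fin n) := ⟨⟨0, hn⟩⟩
  have hP : (Fintype.card (Fin n) : ℝ) < 2 * (1 / (q - 1)) := by
    have hn' : (0 : ℝ) < n := Nat.cast_pos.2 hn
    rw [Fintype.card_fin, mul_one_div, lt_div_iff₀ hc]
    exact (lt_div_iff₀' hn').1 (by linarith)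
  have hform : ∀ x,
      (q - 1) * ((x - μ) ⬝ᵥ B *ᵥ (x - μ)) = (x - μ) ⬝ᵥ ((q - 1) • B) *ᵥ (x - μ) :=
    fun x => by rw [smul_mulVec, dotProduct_smul, smul_eq_mul]
  simp_rw [hform]
  obtain ⟨hint, hval⟩ :=
    integrable_and_integral_one_add_dotProduct_mulVec_rpow_neg (hpos.smul hc) μ hP
  refine ⟨hint, ?_⟩
  rw [hval, det_smul, Fintype.card_fin, mul_rpow (by positivity) hpos.det_pos.le,
    ← rpow_natCast, ← rpow_mul hc.le]
  ring_nf

/-- For `n ≥ 1`, a symmetric positive-definite `B`, `μ ∈ ℝⁿ`, and `1 < q < 1 + 2/n`,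
the integral over `ℝⁿ` of `[1 + (q-1)·(x-μ)ᵀB(x-μ)]^(-1/(q-1))` converges and equals
`(q-1)^(-n/2)·(det B)^(-1/2)·π^(n/2)·Γ(1/(q-1) - n/2)/Γ(1/(q-1))`. -/
theorem integral_qGaussian_kernel (n : ℕ) (hn : 1 ≤ n) (B : Matrix (Fin n) (Fin n) ℝ)
    (hsymm : B.IsSymm) (hpos : B.PosDef) (μ : Fin n → ℝ) (q : ℝ)
    (hq1 : 1 < q) (hq2 : q < 1 + 2 / (n : ℝ)) :
    Integrable (fun x : Fin n → ℝ =>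
      (1 + (q - 1) * ((x - μ) ⬝ᵥ B.mulVec (x - μ))) ^ (-(1 / (q - 1)))) ∧
    (∫ x : Fin n → ℝ, (1 + (q - 1) * ((x - μ) ⬝ᵥ B.mulVec (x - μ))) ^ (-(1 / (q - 1)))) =
      (q - 1) ^ (-(n : ℝ) / 2) * B.det ^ (-(1 : ℝ) / 2) * Real.pi ^ ((n : ℝ) / 2) *
        Real.Gamma (1 / (q - 1) - (n : ℝ) / 2) / Real.Gamma (1 / (q - 1)) :=
  integral_qGaussian_kernel_general n hn B hpos μ q hq1 hq2
end

section
/- The q-th power of a multivariate q-Gaussian kernel is a q'-Gaussian kernel: let n ≥ 1, 1 < q < 1 + 2/n, let Σ_q ∈ ℝ^{n×n} be symmetric positive definite, and set q' = 2 - 1/q and Σ_q' = ((n+2-nq)/(n+(2-n)q))·Σ_q. Then for every y ∈ ℝⁿ, [1 + ((q'-1)/(n+2-nq'))·yᵀ(Σ_q')⁻¹y]^{-1/(q'-1)} = ([1 + ((q-1)/(n+2-nq))·yᵀΣ_q⁻¹y]^{-1/(q-1)})^q. Consequently, the q-escort distribution of a q-Gaussian with q-covariance Σ_q is the q'-Gaussian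 with q-covariance Σ_q'. -/
/-!
Writing `q' = 2 - 1/q` gives `q' - 1 = (q - 1)/q` and `n + 2 - n q' = (n + (2 - n) q)/q`. Since
`(c • S)⁻¹ = c⁻¹ • S⁻¹`, the scale `c = (n + 2 - n q)/(n + (2 - n) q)` is exactly what turns the
coefficient `(q' - 1)/(n + 2 - n q')` of the quadratic form of `S'⁻¹` into the coefficient
`(q - 1)/(n + 2 - n q)` of that of `S⁻¹`, so both kernels have the same base, and the exponent
`-1/(q' - 1) = -q/(q - 1)` is `q` times the exponent `-1/(q - 1)`. The base is at least `1`
because `S⁻¹` is positive definite and `(q - 1) n < 2`, which legitimises `x ^ (a * q) = (x ^ a) ^ q`.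
-/

open Matrix

theorem Matrix.dotProduct_inv_smul_mulVec {ι K : Type*} [Fintype ι] [DecidableEq ι] [Field K]
    {A : Matrix ι ι K} (hA : IsUnit A.det) {c : K} (hc : c ≠ 0) (x : ι → K) :
    x ⬝ᵥ (c • A)⁻¹ *ᵥ x = c⁻¹ * (x ⬝ᵥ A⁻¹ *ᵥ x) := by
  rw [show c • A = Units.mk0 c hc • A from rfl, inv_smul' A _ hA, Units.smul_def,
    smul_mulVec, dotProduct_smul, Units.val_inv_eq_inv_val, Units.val_mk0, smul_eq_mul]

noncomputable def qGaussianKernel (n : ℕ) (q : ℝ) (S : Matrix (Fin n) (Fin n) ℝ)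
    (y : Fin n → ℝ) : ℝ :=
  (1 + ((q - 1) / ((n : ℝ) + 2 - n * q)) * (y ⬝ᵥ S⁻¹ *ᵥ y)) ^ (-(1 / (q - 1)))

section EscortIndex

variable {n q : ℝ}

lemma mul_sub_one_lt_two_of_lt_one_add_two_div (hn : 0 ≤ n) (hqn : q < 1 + 2 / n) :
    (q - 1) * n < 2 := by
  rcases hn.eq_or_lt with rfl | hn
  · simp
  · exact (lt_div_iff₀ hn).mp (by linarith)

lemma two_sub_one_div_sub_one (hq : q ≠ 0) : (2 - 1 / q) - 1 = (q - 1) / q := by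
  field_simp
  ring

lemma neg_one_div_two_sub_one_div_sub_one (hq : q ≠ 0) :
    -(1 / ((2 - 1 / q) - 1)) = -(1 / (q - 1)) * q := by
  rw [two_sub_one_div_sub_one hq, one_div_div]
  ring

lemma escort_coeff_mul_inv_scale (hq : q ≠ 0) (h : n + (2 - n) * q ≠ 0) :
    ((2 - 1 / q) - 1) / (n + 2 - n * (2 - 1 / q)) * ((n + 2 - n * q) / (n + (2 - n) * q))⁻¹ =
      (q - 1) / (n + 2 - n * q) := by
  have hden : n + 2 - n * (2 - 1 / q) = (n + (2 - n) * q) / q := by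
    field_simp
    ring
  rw [two_sub_one_div_sub_one hq, hden, div_div_div_cancel_right₀ hq, inv_div,
    div_mul_div_cancel₀ h]

end EscortIndex

theorem qGaussianKernel_escort {n : ℕ} {q : ℝ} (hq : 1 < q) (hqn : (q - 1) * n < 2)
    {S : Matrix (Fin n) (Fin n) ℝ} (hS : S.PosDef) (y : Fin n → ℝ) :
    qGaussianKernel n (2 - 1 / q)
        ((((n : ℝ) + 2 - n * q) / ((n : ℝ) + (2 - (n : ℝ)) * q)) • S) y =
      qGaussianKernel n q S y ^ q := by
  have hnum : 0 < (n : ℝ) + 2 - n * q := by linarith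
  have hden : 0 < (n : ℝ) + (2 - n) * q := by nlinarith
  have hquad : 0 ≤ y ⬝ᵥ S⁻¹ *ᵥ y := by
    simpa using hS.inv.posSemidef.dotProduct_mulVec_nonneg y
  have hbase : 0 ≤ 1 + ((q - 1) / ((n : ℝ) + 2 - n * q)) * (y ⬝ᵥ S⁻¹ *ᵥ y) := by
    have := mul_nonneg (div_nonneg (sub_nonneg.mpr hq.le) hnum.le) hquad
    linarith
  unfold qGaussianKernel
  rw [dotProduct_inv_smul_mulVec (isUnit_iff_ne_zero.mpr hS.det_pos.ne') (div_pos hnum hden).ne',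
    ← mul_assoc, escort_coeff_mul_inv_scale (by positivity) hden.ne',
    neg_one_div_two_sub_one_div_sub_one (by positivity), Real.rpow_mul hbase]

theorem qGaussian_escort_is_q'Gaussian_general (n : ℕ) (q : ℝ)
    (hq1 : 1 < q) (hq2 : q < 1 + 2 / (n : ℝ))
    (S : Matrix (Fin n) (Fin n) ℝ) (hpos : S.PosDef)
    (q' : ℝ) (hq' : q' = 2 - 1 / q)
    (S' : Matrix (Fin n) (Fin n) ℝ)
    (hS' : S' = (((n : ℝ) + 2 - n * q) / ((n : ℝ) + (2 - (n : ℝ)) * q)) • S)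
    (y : Fin n → ℝ) :
    (1 + ((q' - 1) / ((n : ℝ) + 2 - n * q')) * (y ⬝ᵥ S'⁻¹.mulVec y)) ^ (-(1 / (q' - 1))) =
      ((1 + ((q - 1) / ((n : ℝ) + 2 - n * q)) * (y ⬝ᵥ S⁻¹.mulVec y)) ^ (-(1 / (q - 1)))) ^ q := by
  subst hq' hS'
  exact qGaussianKernel_escort hq1
    (mul_sub_one_lt_two_of_lt_one_add_two_div (Nat.cast_nonneg n) hq2) hpos y

/-- The q-th power of a multivariate q-Gaussian kernel is a q'-Gaussian kernel:
for `n ≥ 1`, `1 < q < 1 + 2/n`, symmetric positive-definite `S` (the q-covariance),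
`q' = 2 - 1/q` and `S' = ((n+2-nq)/(n+(2-n)q))·S`, one has, for every `y ∈ ℝⁿ`,
`[1 + ((q'-1)/(n+2-nq'))·yᵀS'⁻¹y]^(-1/(q'-1)) = ([1 + ((q-1)/(n+2-nq))·yᵀS⁻¹y]^(-1/(q-1)))^q`.
Consequently, the q-escort distribution of a q-Gaussian with q-covariance `S` is the
q'-Gaussian with q-covariance `S'`. -/
theorem qGaussian_escort_is_q'Gaussian (n : ℕ) (hn : 1 ≤ n) (q : ℝ)
    (hq1 : 1 < q) (hq2 : q < 1 + 2 / (n : ℝ))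
    (S : Matrix (Fin n) (Fin n) ℝ) (hsymm : S.IsSymm) (hpos : S.PosDef)
    (q' : ℝ) (hq' : q' = 2 - 1 / q)
    (S' : Matrix (Fin n) (Fin n) ℝ)
    (hS' : S' = (((n : ℝ) + 2 - n * q) / ((n : ℝ) + (2 - (n : ℝ)) * q)) • S)
    (y : Fin n → ℝ) :
    (1 + ((q' - 1) / ((n : ℝ) + 2 - n * q')) * (y ⬝ᵥ S'⁻¹.mulVec y)) ^ (-(1 / (q' - 1))) =
      ((1 + ((q - 1) / ((n : ℝ) + 2 - n * q)) * (y ⬝ᵥ S⁻¹.mulVec y)) ^ (-(1 / (q - 1)))) ^ q :=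
  qGaussian_escort_is_q'Gaussian_general n q hq1 hq2 S hpos q' hq' S' hS' y
end
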